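/- Let T > 0, r ∈ ℝ, σ̄ > 0, 0 ≤ t < T, and u ∈ ℝ. With d₁ = (−u + (r + σ̄²/2)(T² − t²)/2)/(σ̄ √((T³ − t³)/3)), d₂ = d₁ − (σ̄/T)√((T³ − t³)/3), and Q = (r + σ̄²/2)(T² − t²)/(2T) − σ̄²(T³ − t³)/(6T²), the standard normal density Φ satisfies the identity Φ(d₁) = e^{u/T − Q} Φ(d₂). -/
import Mathlib


/-- Partial derivative in the first (time) variable. -/
noncomputable def pdT (F : ℝ → ℝ → ℝ → ℝ) (t s u : ℝ) : ℝ := deriv (fun x => F x s u) t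

/-- Partial derivative in the second (log-price) variable. -/
noncomputable def pdS (F : ℝ → ℝ → ℝ → ℝ) (t s u : ℝ) : ℝ := deriv (fun x => F t x u) s

/-- Partial derivative in the third (average) variable. -/
noncomputable def pdU (F : ℝ → ℝ → ℝ → ℝ) (t s u : ℝ) : ℝ := deriv (fun x => F t s x) u

/-- Standard normal cumulative distribution function. -/
noncomputable def stdN (x : ℝ) : ℝ :=
  ∫ y in Set.Iic x, Real.exp (-(y ^ 2) / 2) / Real.sqrt (2 * Real.pi)

/-- Standard normal probability density function. -/
noncomputable def stdPhi (x : ℝ) : ℝ := Real.exp (-(x ^ 2) / 2) / Real.sqrt (2 * Real.pi)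

/-- `d₁` for the floating-strike geometric Asian call. -/
noncomputable def dOne (T r σ t u : ℝ) : ℝ :=
  (-u + (r + σ ^ 2 / 2) * (T ^ 2 - t ^ 2) / 2) / (σ * Real.sqrt ((T ^ 3 - t ^ 3) / 3))

/-- `d₂` for the floating-strike geometric Asian call. -/
noncomputable def dTwo (T r σ t u : ℝ) : ℝ :=
  dOne T r σ t u - (σ / T) * Real.sqrt ((T ^ 3 - t ^ 3) / 3)

/-- The quantity `Q` appearing in the geometric Asian option formulas. -/
noncomputable def Qfl (T r σ t : ℝ) : ℝ :=
  (r + σ ^ 2 / 2) * (T ^ 2 - t ^ 2) / (2 * T) - σ ^ 2 * (T ^ 3 - t ^ 3) / (6 * T ^ 2)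

theorem stmt6 (T r σ t u : ℝ) (hT : 0 < T) (hσ : 0 < σ) (ht0 : 0 ≤ t) (htT : t < T) :
    stdPhi (dOne T r σ t u) =
      Real.exp (u / T - Qfl T r σ t) * stdPhi (dTwo T r σ t u) := by
  have hV : (0:ℝ) < (T ^ 3 - t ^ 3) / 3 := by
    have h3 : t ^ 3 < T ^ 3 := by
      have := pow_lt_pow_left₀ htT ht0 (three_ne_zero)
      simpa using this
    linarith
  set s := Real.sqrt ((T ^ 3 - t ^ 3) / 3) with hs
  have hs0 : 0 < s := Real.sqrt_pos.mpr hV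
  have hs2 : s ^ 2 = (T ^ 3 - t ^ 3) / 3 := Real.sq_sqrt hV.le
  have hσ' : σ ≠ 0 := hσ.ne'
  have hT' : T ≠ 0 := hT.ne'
  have hs' : s ≠ 0 := hs0.ne'
  have key2 : (dTwo T r σ t u) ^ 2 = (dOne T r σ t u) ^ 2
      - 2 * (-u + (r + σ ^ 2 / 2) * (T ^ 2 - t ^ 2) / 2) / T + σ ^ 2 * s ^ 2 / T ^ 2 := by
    unfold dTwo dOne
    rw [← hs]
    field_simp
    ring
  have key : -(dOne T r σ t u) ^ 2 / 2 =
      (u / T - Qfl T r σ t) + (-(dTwo T r σ t u) ^ 2 / 2) := by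
    rw [key2, hs2]
    unfold Qfl
    field_simp
    ring
  unfold stdPhi
  rw [key, Real.exp_add]
  ring
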